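/- Let S be a finite p-group for odd p, and suppose every subgroup L with 𝔛(S) ≤ L ≤ J(S)𝔛(S) is normal in S. If 𝔛(S) ≤ L ≤ J(S)𝔛(S), then 𝔛(L) = 𝔛(S). -/

import Mathlib

/-! If `𝔛(S) ≤ L`, an Oliver chain of `S` ending in `𝔛(S)` restricts to one of `L`,
so `𝔛(S) ≤ 𝔛(L)`. Conversely, as `p` is odd, `C_S(𝔛(S)) ≤ 𝔛(S) ≤ L`, so centralizers
in `S` of subgroups containing `𝔛(S)` are computed in `L`; an Oliver chain `R` of `L`
then yields the chain `𝔛(S) R_j` of `S`, whose members are normal by hypothesis,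
and `𝔛(L) ≤ 𝔛(S)`. -/

/-- Iterated commutator of subgroups: `[A,B;0] = A`, `[A,B;k+1] = ⁅[A,B;k], B⁆`,
so `[A,B;1] = ⁅A,B⁆` and `[A,B;k] = [[A,B;k-1],B]`. -/
def iterCommutator {G : Type*} [Group G] (A B : Subgroup G) : ℕ → Subgroup G
  | 0 => A
  | k + 1 => ⁅iterCommutator A B k, B⁆

/-- `Ω₁(P)`: the subgroup generated by the elements of `P` of order dividing `p`. -/
def Omega1 {G : Type*} [Group G] (p : ℕ) (P : Subgroup G) : Subgroup G :=
  Subgroup.closure {x | x ∈ P ∧ x ^ p = 1}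

/-- Oliver's condition (∗) for a chain `⊥ = Q 0 ≤ Q 1 ≤ ⋯ ≤ Q n` of normal subgroups:
`[Ω₁(C_G(Q i)), Q (i+1); p-1] = 1` for all `i < n`. -/
def IsOliverChain {G : Type*} [Group G] (p : ℕ) (Q : ℕ → Subgroup G) (n : ℕ) : Prop :=
  Q 0 = ⊥ ∧ (∀ i < n, Q i ≤ Q (i + 1)) ∧ (∀ i ≤ n, (Q i).Normal) ∧
    ∀ i < n,
      iterCommutator (Omega1 p (Subgroup.centralizer (Q i : Set G))) (Q (i + 1)) (p - 1) = ⊥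

/-- A (normal) subgroup `K` admits a chain witnessing Oliver's condition (∗). -/
def HasOliverChain {G : Type*} [Group G] (p : ℕ) (K : Subgroup G) : Prop :=
  ∃ n Q, IsOliverChain p Q n ∧ Q n = K

/-- The Oliver subgroup `𝔛(G)`: the largest normal subgroup of `G` admitting a chain of
`G`-normal subgroups satisfying Oliver's condition (∗). -/
def OliverSubgroup (p : ℕ) (G : Type*) [Group G] : Subgroup G :=
  sSup {K | HasOliverChain p K}

/-- `E` is an elementary abelian `p`-subgroup. -/
def IsElemAbelian {G : Type*} [Group G] (p : ℕ) (E : Subgroup G) : Prop :=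
  (∀ a ∈ E, ∀ b ∈ E, a * b = b * a) ∧ ∀ x ∈ E, x ^ p = 1

/-- The rank of a finite elementary abelian `p`-subgroup `E` (so `|E| = p ^ elemRank p E`). -/
noncomputable def elemRank {G : Type*} [Group G] (p : ℕ) (E : Subgroup G) : ℕ :=
  (Nat.card E).factorization p

/-- The `p`-rank of `G`: the maximal rank of an elementary abelian `p`-subgroup. -/
noncomputable def pRank (p : ℕ) (G : Type*) [Group G] : ℕ :=
  sSup {n | ∃ E : Subgroup G, IsElemAbelian p E ∧ elemRank p E = n}

/-- The Thompson subgroup `J(G)`, generated by all elementary abelian `p`-subgroups of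
rank equal to the `p`-rank of `G`. -/
def Thompson (p : ℕ) (G : Type*) [Group G] : Subgroup G :=
  sSup {E | IsElemAbelian p E ∧ elemRank p E = pRank p G}

open Subgroup

section General

variable {G : Type*} [Group G]

theorem Subgroup.commutator_sup_le_of_le_centralizer {H K B N : Subgroup G} [N.Normal]
    (hK : H ≤ centralizer K) (hB : ⁅H, B⁆ ≤ N) : ⁅H, K ⊔ B⁆ ≤ N := by
  set π := QuotientGroup.mk' N
  have key : ∀ K : Subgroup G, ⁅H, K⁆ ≤ N ↔ K.map π ≤ centralizer (H.map π) := fun K => by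
    rw [← le_centralizer_iff, ← commutator_eq_bot_iff_le_centralizer, ← map_commutator,
      map_eq_bot_iff, QuotientGroup.ker_mk']
  rw [key, map_sup, sup_le_iff, ← key, ← key]
  exact ⟨(commutator_eq_bot_iff_le_centralizer.2 hK).trans_le bot_le, hB⟩

theorem Subgroup.map_subtype_centralizer {L : Subgroup G} (V : Subgroup L) :
    (centralizer (V : Set L)).map L.subtype = centralizer (V.map L.subtype : Set G) ⊓ L := by
  ext x
  constructor
  · rintro ⟨y, hy, rfl⟩
    refine ⟨?_, y.2⟩
    rintro _ ⟨v, hv, rfl⟩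
    exact congrArg Subtype.val (hy v hv)
  · rintro ⟨hx, hxL⟩
    exact ⟨⟨x, hxL⟩, fun v hv => Subtype.ext (hx _ ⟨v, hv, rfl⟩), rfl⟩

theorem IsPGroup.inf_center_ne_bot {p : ℕ} [Fact p.Prime] [Finite G] (hG : IsPGroup p G)
    {N : Subgroup G} [N.Normal] (hN : N ≠ ⊥) : N ⊓ center G ≠ ⊥ := by
  have hdvd : p ∣ Nat.card N := by
    obtain ⟨k, hk⟩ := IsPGroup.iff_card.mp (hG.to_subgroup N)
    have hk0 : k ≠ 0 := by
      rintro rfl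
      exact hN (card_eq_one.mp (by rw [hk, pow_zero]))
    exact hk ▸ dvd_pow_self p hk0
  obtain ⟨b, hb, hb1⟩ := (hG.of_equiv ConjAct.toConjAct)
    |>.exists_fixed_point_of_prime_dvd_card_of_fixed_point (α := N) hdvd (a := 1) smul_one
  have hbZ : (b : G) ∈ center G := mem_center_iff.2 fun g => by
    have hconj := congrArg Subtype.val (hb (ConjAct.toConjAct g))
    rwa [ConjAct.Subgroup.val_conj_smul, ConjAct.toConjAct_smul, mul_inv_eq_iff_eq_mul] at hconj
  exact fun h => hb1 (Subtype.ext ((eq_bot_iff_forall _).1 h b ⟨b.2, hbZ⟩).symm)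

end General

section Omega1

variable {G G' : Type*} [Group G] [Group G'] {p : ℕ}

theorem Omega1_le (P : Subgroup G) : Omega1 p P ≤ P :=
  (closure_le P).2 fun _ hx => hx.1

theorem Omega1_mono {P Q : Subgroup G} (h : P ≤ Q) : Omega1 p P ≤ Omega1 p Q :=
  closure_mono fun _ hx => ⟨h hx.1, hx.2⟩

theorem map_Omega1 {f : G →* G'} (hf : Function.Injective f) (P : Subgroup G) :
    (Omega1 p P).map f = Omega1 p (P.map f) := by
  rw [Omega1, MonoidHom.map_closure, Omega1]
  congr 1
  ext y
  constructor
  · rintro ⟨x, ⟨hxP, hxp⟩, rfl⟩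
    exact ⟨⟨x, hxP, rfl⟩, by rw [← map_pow, hxp, map_one]⟩
  · rintro ⟨⟨x, hxP, rfl⟩, hxp⟩
    exact ⟨x, ⟨hxP, hf (by rw [map_pow, hxp, map_one])⟩, rfl⟩

instance Omega1_normal (P : Subgroup G) [P.Normal] : (Omega1 p P).Normal :=
  normal_iff_map_conj_eq.2 fun g => by
    rw [map_Omega1 (MulAut.conj g).injective, Normal.map_conj_eq P g]

end Omega1

section IterCommutator

variable {G G' : Type*} [Group G] [Group G']

theorem iterCommutator_mono {A A' B B' : Subgroup G} (hA : A ≤ A') (hB : B ≤ B') :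
    ∀ k, iterCommutator A B k ≤ iterCommutator A' B' k
  | 0 => hA
  | k + 1 => commutator_mono (iterCommutator_mono hA hB k) hB

theorem map_iterCommutator (f : G →* G') (A B : Subgroup G) :
    ∀ k, (iterCommutator A B k).map f = iterCommutator (A.map f) (B.map f) k
  | 0 => rfl
  | k + 1 => by
    rw [iterCommutator, map_commutator, map_iterCommutator f A B k, iterCommutator]

theorem iterCommutator_eq_bot_of_le {A B : Subgroup G} {j k : ℕ}
    (h : iterCommutator A B j = ⊥) (hjk : j ≤ k) : iterCommutator A B k = ⊥ := by
  induction k, hjk using Nat.le_induction with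
  | base => exact h
  | succ k _ ih => rw [iterCommutator, ih, commutator_bot_left]

instance iterCommutator_normal (A B : Subgroup G) [A.Normal] [B.Normal] (k : ℕ) :
    (iterCommutator A B k).Normal := by
  induction k with
  | zero => assumption
  | succ k ih => exact commutator_normal _ _

/-- Carrying `centralizer A` through the induction keeps the `A`-part of `A ⊔ R'` invisible. -/
theorem iterCommutator_sup_le_of_le_centralizer {A R' H H' : Subgroup G} [A.Normal] [R'.Normal]
    [H'.Normal] (hHA : H ≤ centralizer A) (hHH' : H ≤ H') (k : ℕ) :
    iterCommutator H (A ⊔ R') k ≤ iterCommutator H' R' k ⊓ centralizer A := by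
  induction k with
  | zero => exact le_inf hHH' hHA
  | succ k ih =>
    refine le_inf ?_ ?_
    · exact commutator_sup_le_of_le_centralizer (ih.trans inf_le_right)
        (commutator_mono (ih.trans inf_le_left) le_rfl)
    · exact (commutator_mono (ih.trans inf_le_right) le_rfl).trans (commutator_le_left _ _)

theorem iterCommutator_Omega1_centralizer_sup_le (p : ℕ) {A R R' : Subgroup G} [A.Normal]
    [R.Normal] [R'.Normal] (k : ℕ) :
    iterCommutator (Omega1 p (centralizer ((A ⊔ R : Subgroup G) : Set G))) (A ⊔ R') k ≤
      iterCommutator (Omega1 p (centralizer (R : Set G))) R' k := by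
  have hA : Omega1 p (centralizer ((A ⊔ R : Subgroup G) : Set G)) ≤ centralizer (A : Set G) :=
    (Omega1_le _).trans (centralizer_le (SetLike.coe_subset_coe.2 le_sup_left))
  have hR : Omega1 p (centralizer ((A ⊔ R : Subgroup G) : Set G)) ≤
      Omega1 p (centralizer (R : Set G)) :=
    Omega1_mono (centralizer_le (SetLike.coe_subset_coe.2 le_sup_right))
  exact (iterCommutator_sup_le_of_le_centralizer hA hR k).trans inf_le_left

end IterCommutator

section OliverChain

variable {G : Type*} [Group G] {p : ℕ}

theorem IsOliverChain.le_last {Q : ℕ → Subgroup G} {n : ℕ} (h : IsOliverChain p Q n) {i : ℕ}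
    (hi : i ≤ n) : Q i ≤ Q n := by
  induction hi using Nat.decreasingInduction with
  | self => exact le_rfl
  | of_succ k hk ih => exact (h.2.1 k hk).trans ih

theorem HasOliverChain.normal {K : Subgroup G} (h : HasOliverChain p K) : K.Normal := by
  obtain ⟨n, Q, hQ, rfl⟩ := h
  exact hQ.2.2.1 n le_rfl

theorem HasOliverChain.le_oliverSubgroup {K : Subgroup G} (h : HasOliverChain p K) :
    K ≤ OliverSubgroup p G :=
  le_sSup h

theorem hasOliverChain_bot : HasOliverChain p (⊥ : Subgroup G) :=
  ⟨0, fun _ => ⊥, ⟨rfl, fun _ hi => absurd hi (Nat.not_lt_zero _),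
    fun _ _ => inferInstance, fun _ hi => absurd hi (Nat.not_lt_zero _)⟩, rfl⟩

theorem HasOliverChain.extend {A B : Subgroup G} (hA : HasOliverChain p A) (hAB : A ≤ B)
    (hB : B.Normal) (hAB' : iterCommutator (Omega1 p (centralizer (A : Set G))) B (p - 1) = ⊥) :
    HasOliverChain p B := by
  obtain ⟨n, Q, ⟨hQ0, hQmono, hQnorm, hQcomm⟩, rfl⟩ := hA
  have hlt : ∀ i < n + 1, Function.update Q (n + 1) B i = Q i := fun i hi =>
    Function.update_of_ne (by omega) _ _
  have hlast : Function.update Q (n + 1) B (n + 1) = B := Function.update_self _ _ _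
  refine ⟨n + 1, Function.update Q (n + 1) B,
    ⟨?_, fun i hi => ?_, fun i hi => ?_, fun i hi => ?_⟩, hlast⟩
  · rw [hlt 0 n.succ_pos, hQ0]
  · rw [hlt i hi]
    rcases Nat.lt_succ_iff_lt_or_eq.1 hi with hi | rfl
    · rw [hlt (i + 1) (by omega)]; exact hQmono i hi
    · rwa [hlast]
  · rcases Nat.lt_or_eq_of_le hi with hi | rfl
    · rw [hlt i hi]; exact hQnorm i (by omega)
    · rwa [hlast]
  · rw [hlt i hi]
    rcases Nat.lt_succ_iff_lt_or_eq.1 hi with hi | rfl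
    · rw [hlt (i + 1) (by omega)]; exact hQcomm i hi
    · rwa [hlast]

theorem HasOliverChain.of_steps {U : ℕ → Subgroup G} {m : ℕ} (h0 : HasOliverChain p (U 0))
    (hstep : ∀ j < m, U j ≤ U (j + 1) ∧ (U (j + 1)).Normal ∧
      iterCommutator (Omega1 p (centralizer (U j : Set G))) (U (j + 1)) (p - 1) = ⊥) :
    HasOliverChain p (U m) := by
  induction m with
  | zero => exact h0
  | succ m ih =>
    obtain ⟨hle, hnorm, hcomm⟩ := hstep m m.lt_succ_self
    exact (ih fun j hj => hstep j (by omega)).extend hle hnorm hcomm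

theorem HasOliverChain.sup {A B : Subgroup G} (hA : HasOliverChain p A)
    (hB : HasOliverChain p B) : HasOliverChain p (A ⊔ B) := by
  have := hA.normal
  obtain ⟨m, R, ⟨hR0, hRmono, hRnorm, hRcomm⟩, rfl⟩ := hB
  refine HasOliverChain.of_steps (U := fun j => A ⊔ R j) (by simpa [hR0] using hA)
    fun j hj => ?_
  have := hRnorm j hj.le
  have := hRnorm (j + 1) hj
  exact ⟨sup_le_sup_left (hRmono j hj) A, inferInstance, le_bot_iff.1
    ((iterCommutator_Omega1_centralizer_sup_le p (p - 1)).trans (hRcomm j hj).le)⟩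

theorem hasOliverChain_oliverSubgroup [Finite G] : HasOliverChain p (OliverSubgroup p G) := by
  have hsup : SupClosed {K : Subgroup G | HasOliverChain p K} := fun _ hA _ hB => hA.sup hB
  exact hsup.sSup_mem (Set.toFinite _) hasOliverChain_bot subset_rfl

instance oliverSubgroup_normal [Finite G] : (OliverSubgroup p G).Normal :=
  hasOliverChain_oliverSubgroup.normal

end OliverChain

section OliverSubgroup

variable {G : Type*} [Group G] {p : ℕ}

/-- The extension is possible because `⁅Ω₁(C_G(X)), P, P⁆ = 1`: the first commutator lands in
`X ⊓ C_G(X) = Z(X)`, which `P ≤ X ⊔ C_G(X)` centralizes. -/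
theorem HasOliverChain.of_commutator_le {X P : Subgroup G} (hX : HasOliverChain p X)
    (hp : 2 ≤ p - 1) (hXP : X ≤ P) [P.Normal] (hPX : ⁅P, ⊤⁆ ≤ X)
    (hPC : P ≤ X ⊔ centralizer (X : Set G)) : HasOliverChain p P := by
  have := hX.normal
  refine hX.extend hXP ‹_› (iterCommutator_eq_bot_of_le (j := 2) ?_ hp)
  have hcomm : ⁅Omega1 p (centralizer (X : Set G)), P⁆ ≤ X ⊓ centralizer (X : Set G) :=
    le_inf ((commutator_mono le_top le_rfl).trans (commutator_comm P ⊤ ▸ hPX))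
      ((commutator_mono (Omega1_le _) le_rfl).trans (commutator_le_left _ _))
  have hcent : P ≤ centralizer ((X ⊓ centralizer (X : Set G) : Subgroup G) : Set G) :=
    hPC.trans (sup_le (le_centralizer_iff.1 inf_le_right)
      (centralizer_le (SetLike.coe_subset_coe.2 inf_le_left)))
  exact commutator_eq_bot_iff_le_centralizer.2 (hcomm.trans (le_centralizer_iff.1 hcent))

/-- If `C_G(𝔛(G)) ≰ 𝔛(G)`, the preimage `P` of a nontrivial central subgroup of `G ⧸ 𝔛(G)`
inside `C_G(𝔛(G)) 𝔛(G) ⧸ 𝔛(G)` would extend an Oliver chain beyond `𝔛(G)`. -/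
theorem centralizer_oliverSubgroup_le [Fact p.Prime] (hp : Odd p) [Finite G]
    (hG : IsPGroup p G) :
    centralizer (OliverSubgroup p G : Set G) ≤ OliverSubgroup p G := by
  set X := OliverSubgroup p G
  set π := QuotientGroup.mk' X
  have hπ : π.ker = X := QuotientGroup.ker_mk' X
  by_contra hCX
  have : ((centralizer (X : Set G)).map π).Normal :=
    Normal.map inferInstance π (QuotientGroup.mk'_surjective X)
  have hZ := (hG.to_quotient X).inf_center_ne_bot
    (N := (centralizer (X : Set G)).map π) (by rwa [Ne, Subgroup.map_eq_bot_iff, hπ])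
  set P := ((centralizer (X : Set G)).map π ⊓ center (G ⧸ X)).comap π
  have hp2 : 2 ≤ p - 1 := by
    obtain ⟨k, rfl⟩ := hp
    have := (Fact.out : (2 * k + 1).Prime).two_le
    omega
  have hXP : X ≤ P := hπ ▸ ker_le_comap π _
  have hPX : ⁅P, ⊤⁆ ≤ X := by
    rw [← hπ, ← Subgroup.map_eq_bot_iff, map_commutator, commutator_eq_bot_iff_le_centralizer]
    exact (map_comap_le _ _).trans (inf_le_right.trans (center_le_centralizer _))
  have hPC : P ≤ X ⊔ centralizer (X : Set G) := by
    refine (comap_mono inf_le_left).trans (comap_map_eq π _).le |>.trans ?_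
    rw [hπ, sup_comm]
  have hPX' : P ≤ X :=
    (hasOliverChain_oliverSubgroup.of_commutator_le hp2 hXP hPX hPC).le_oliverSubgroup
  apply hZ
  rwa [← map_comap_eq_self_of_surjective (QuotientGroup.mk'_surjective X) (_ ⊓ _),
    Subgroup.map_eq_bot_iff, hπ]

theorem IsOliverChain.subgroupOf {Q : ℕ → Subgroup G} {n : ℕ} (h : IsOliverChain p Q n)
    {L : Subgroup G} (hL : Q n ≤ L) : IsOliverChain p (fun i => (Q i).subgroupOf L) n := by
  have hmap : ∀ i ≤ n, ((Q i).subgroupOf L).map L.subtype = Q i := fun i hi => by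
    rw [subgroupOf_map_subtype, inf_of_le_left ((h.le_last hi).trans hL)]
  obtain ⟨hQ0, hQmono, hQnorm, hQcomm⟩ := h
  refine ⟨by simp only [hQ0, bot_subgroupOf], fun i hi => comap_mono (hQmono i hi),
    fun i hi => (hQnorm i hi).subgroupOf L, fun i hi => ?_⟩
  refine (Subgroup.map_eq_bot_iff_of_injective _ L.subtype_injective).1 (le_bot_iff.1 ?_)
  rw [map_iterCommutator, map_Omega1 L.subtype_injective, map_subtype_centralizer,
    hmap i hi.le, hmap (i + 1) hi]
  exact (iterCommutator_mono (Omega1_mono inf_le_left) le_rfl _).trans (hQcomm i hi).le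

theorem oliverSubgroup_le_map_oliverSubgroup [Finite G] {L : Subgroup G}
    (hL : OliverSubgroup p G ≤ L) :
    OliverSubgroup p G ≤ (OliverSubgroup p L).map L.subtype := by
  obtain ⟨n, Q, hQ, hQn⟩ := hasOliverChain_oliverSubgroup (p := p) (G := G)
  have hle : (Q n).subgroupOf L ≤ OliverSubgroup p L :=
    HasOliverChain.le_oliverSubgroup ⟨n, _, hQ.subgroupOf (hQn ▸ hL), rfl⟩
  calc OliverSubgroup p G = ((Q n).subgroupOf L).map L.subtype := by
        rw [subgroupOf_map_subtype, hQn, inf_of_le_left hL]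
    _ ≤ (OliverSubgroup p L).map L.subtype := map_mono hle

/-- Since `C_G(X) ≤ L`, centralizers in `G` of subgroups containing `X` are computed in `L`,
so an Oliver chain `R` of `L` lifts to the chain `X ⊔ R j` of `G` on top of `X`. -/
theorem HasOliverChain.sup_map_subtype {X L : Subgroup G} (hX : HasOliverChain p X)
    (hXL : X ≤ L) (hCL : centralizer (X : Set G) ≤ L)
    (hnormal : ∀ K : Subgroup G, X ≤ K → K ≤ L → K.Normal) {K : Subgroup L}
    (hK : HasOliverChain p K) : HasOliverChain p (X ⊔ K.map L.subtype) := by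
  obtain ⟨m, R, ⟨hR0, hRmono, hRnorm, hRcomm⟩, rfl⟩ := hK
  have : (X.subgroupOf L).Normal := hX.normal.subgroupOf L
  have hU : ∀ j, X ⊔ (R j).map L.subtype = (X.subgroupOf L ⊔ R j).map L.subtype := fun j => by
    rw [Subgroup.map_sup, subgroupOf_map_subtype, inf_of_le_left hXL]
  refine HasOliverChain.of_steps (U := fun j => X ⊔ (R j).map L.subtype)
    (by simpa [hR0] using hX) fun j hj => ⟨sup_le_sup_left (map_mono (hRmono j hj)) X,
      hnormal _ le_sup_left (sup_le hXL (map_subtype_le _)), ?_⟩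
  have := hRnorm j hj.le
  have := hRnorm (j + 1) hj
  have hC : Omega1 p (centralizer ((X ⊔ (R j).map L.subtype : Subgroup G) : Set G)) ≤
      (Omega1 p (centralizer ((X.subgroupOf L ⊔ R j : Subgroup L) : Set L))).map L.subtype := by
    rw [map_Omega1 L.subtype_injective, map_subtype_centralizer, ← hU j]
    exact Omega1_mono (le_inf le_rfl
      ((centralizer_le (SetLike.coe_subset_coe.2 le_sup_left)).trans hCL))
  refine le_bot_iff.1 ((iterCommutator_mono hC (hU (j + 1)).le _).trans ?_)
  rw [← map_iterCommutator, ← map_bot L.subtype, ← hRcomm j hj]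
  exact map_mono (iterCommutator_Omega1_centralizer_sup_le p _)

theorem map_oliverSubgroup_le [Finite G] {L : Subgroup G} (hXL : OliverSubgroup p G ≤ L)
    (hCL : centralizer (OliverSubgroup p G : Set G) ≤ L)
    (hnormal : ∀ K : Subgroup G, OliverSubgroup p G ≤ K → K ≤ L → K.Normal) :
    (OliverSubgroup p L).map L.subtype ≤ OliverSubgroup p G :=
  map_le_iff_le_comap.2 <| sSup_le fun _ hK => map_le_iff_le_comap.1 <| le_sup_right.trans
    (hasOliverChain_oliverSubgroup.sup_map_subtype hXL hCL hnormal hK).le_oliverSubgroup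

end OliverSubgroup

/-- if every subgroup `L` with `𝔛(S) ≤ L ≤ J(S)𝔛(S)` is normal in `S`,
then `𝔛(L) = 𝔛(S)` for all such `L`. -/
theorem oliver_eq_of_all_normal (p : ℕ) [Fact p.Prime] (hp : Odd p)
    (S : Type*) [Group S] [Fintype S] (hS : IsPGroup p S)
    (hnormal : ∀ L : Subgroup S, OliverSubgroup p S ≤ L →
      L ≤ Thompson p S ⊔ OliverSubgroup p S → L.Normal) :
    ∀ L : Subgroup S, OliverSubgroup p S ≤ L → L ≤ Thompson p S ⊔ OliverSubgroup p S →
      Subgroup.map L.subtype (OliverSubgroup p L) = OliverSubgroup p S := by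
  intro L hXL hLJ
  exact le_antisymm
    (map_oliverSubgroup_le hXL ((centralizer_oliverSubgroup_le hp hS).trans hXL)
      fun K hXK hKL => hnormal K hXK (hKL.trans hLJ))
    (oliverSubgroup_le_map_oliverSubgroup hXL)
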